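/- arXiv:1210.0312 — 2 statements merged into one kernel-verified Lean document; each statement's English description precedes it below -/
import Mathlib

section
/- For κ₁, κ₂ ∈ ℂ with Re κ₁ > 0, Re κ₂ > 0, nonnegative integers i₁, i₂, and t ≥ 0, the cross-covariance integral γ^{(i₁,i₂)}(t) := σ² (-κ₁)^{i₁} (-κ̄₂)^{i₂} ∫_{-∞}^0 e^{-κ₁(t-s)} ((t-s)^{i₁}/i₁!) e^{κ̄₂ s} ((-s)^{i₂}/i₂!) ds equals (σ² (-κ₁)^{i₁} (-κ̄₂)^{i₂} e^{-κ₁ t} / i₂!) · ∑_{j=0}^{i₁} t^j (i₁+i₂-j)! / ( j! (i₁-j)! (κ₁+κ̄₂)^{i₁+i₂-j+1} ). -/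
/-!
Substituting `s = -x`, the integrand becomes `e^{-κ₁ t} (t + x)^{i₁} x^{i₂} e^{-c x}` on `(0, ∞)`
up to constant factors, where `c = κ₁ + κ̄₂` has positive real part. Expanding `(t + x)^{i₁}`
binomially reduces the integral to the complex Gamma integrals `∫₀^∞ x^m e^{-c x} dx = m! / c^{m+1}`,
which follow by induction from `c ∫ x^{m+1} e^{-c x} = (m + 1) ∫ x^m e^{-c x}` (integration by parts).
-/

open MeasureTheory Finset Complex Filter Set Topology
open scoped Nat

lemma norm_cexp_neg_mul_ofReal (c : ℂ) (x : ℝ) : ‖cexp (-c * x)‖ = Real.exp (-(c.re * x)) := by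
  simp [Complex.norm_exp]

lemma hasDerivAt_cexp_neg_mul_ofReal (c : ℂ) (x : ℝ) :
    HasDerivAt (fun y : ℝ => cexp (-c * y)) (-c * cexp (-c * x)) x := by
  simpa [mul_comm] using ((hasDerivAt_id (x : ℂ)).const_mul (-c)).cexp.comp_ofReal

section GammaIntegral

variable {c : ℂ}

lemma integrableOn_pow_mul_cexp_neg_mul_Ioi (hc : 0 < c.re) (m : ℕ) :
    IntegrableOn (fun x : ℝ => (x : ℂ) ^ m * cexp (-c * x)) (Ioi 0) := by
  have hreal : IntegrableOn (fun x : ℝ => x ^ (m : ℝ) * Real.exp (-c.re * x ^ (1 : ℝ))) (Ioi 0) :=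
    integrableOn_rpow_mul_exp_neg_mul_rpow (by linarith [(m.cast_nonneg : (0 : ℝ) ≤ m)]) one_pos hc
  refine hreal.mono' (by fun_prop) ?_
  filter_upwards [self_mem_ae_restrict measurableSet_Ioi] with x hx
  rw [norm_mul, norm_pow, norm_cexp_neg_mul_ofReal, norm_real, Real.norm_of_nonneg hx.out.le]
  simp [Real.rpow_natCast]

lemma tendsto_pow_mul_cexp_neg_mul_atTop (hc : 0 < c.re) (m : ℕ) :
    Tendsto (fun x : ℝ => (x : ℂ) ^ m * cexp (-c * x)) atTop (𝓝 0) := by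
  have hreal : Tendsto (fun x : ℝ => (c.re * x) ^ m * Real.exp (-(c.re * x)) / c.re ^ m)
      atTop (𝓝 0) := by
    simpa using ((Real.tendsto_pow_mul_exp_neg_atTop_nhds_zero m).comp
      (tendsto_id.const_mul_atTop hc)).div_const (c.re ^ m)
  refine squeeze_zero_norm' ?_ hreal
  filter_upwards [eventually_ge_atTop 0] with x hx
  rw [norm_mul, norm_pow, norm_cexp_neg_mul_ofReal, norm_real, Real.norm_of_nonneg hx, mul_pow]
  field_simp
  rfl

lemma integral_pow_succ_mul_cexp_neg_mul_Ioi (hc : 0 < c.re) (m : ℕ) :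
    ∫ x in Ioi (0 : ℝ), (x : ℂ) ^ (m + 1) * cexp (-c * x) =
      (m + 1) / c * ∫ x in Ioi (0 : ℝ), (x : ℂ) ^ m * cexp (-c * x) := by
  have hc0 : c ≠ 0 := fun h => by simp [h] at hc
  have hu : ∀ x : ℝ, HasDerivAt (fun y : ℝ => (y : ℂ) ^ (m + 1)) ((m + 1) * (x : ℂ) ^ m) x := by
    intro x
    simpa using (hasDerivAt_pow (m + 1) (x : ℂ)).comp_ofReal
  have hv : ∀ x : ℝ, HasDerivAt (fun y : ℝ => -cexp (-c * y) / c) (cexp (-c * x)) x := by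
    intro x
    refine ((hasDerivAt_cexp_neg_mul_ofReal c x).neg.div_const c).congr_deriv ?_
    field_simp
  have hI := integrableOn_pow_mul_cexp_neg_mul_Ioi hc
  have hparts := integral_Ioi_mul_deriv_eq_deriv_mul (a := 0) (a' := 0) (b' := 0)
    (fun x _ => hu x) (fun x _ => hv x) (hI (m + 1)) ?_ ?_ ?_
  · rw [hparts, sub_zero, zero_sub, ← integral_neg, ← integral_const_mul]
    congr 1 with x
    ring
  · refine IntegrableOn.congr_fun ((hI m).const_mul (-(m + 1) / c)) (fun x _ => ?_)
      measurableSet_Ioi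
    simp only [Pi.mul_apply]
    ring
  · have hcont : Continuous ((fun y : ℝ => (y : ℂ) ^ (m + 1)) * fun y : ℝ => -cexp (-c * y) / c) :=
      by fun_prop
    simpa using (hcont.tendsto 0).mono_left nhdsWithin_le_nhds
  · simpa [Pi.mul_def, mul_div_assoc', div_eq_mul_inv, mul_assoc] using
      (tendsto_pow_mul_cexp_neg_mul_atTop hc (m + 1)).neg.mul_const c⁻¹

lemma integral_pow_mul_cexp_neg_mul_Ioi (hc : 0 < c.re) (m : ℕ) :
    ∫ x in Ioi (0 : ℝ), (x : ℂ) ^ m * cexp (-c * x) = m ! / c ^ (m + 1) := by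
  induction m with
  | zero =>
    simpa using integral_exp_mul_complex_Ioi (a := -c) (by simpa using hc) 0
  | succ m ih =>
    rw [integral_pow_succ_mul_cexp_neg_mul_Ioi hc, ih, Nat.factorial_succ]
    push_cast
    field_simp
    ring

lemma integral_add_pow_div_factorial_mul_pow_mul_cexp_neg_mul_Ioi (hc : 0 < c.re) (t : ℂ)
    (n k : ℕ) :
    ∫ x in Ioi (0 : ℝ), (t + x) ^ n / n ! * ((x : ℂ) ^ k * cexp (-c * x)) =
      ∑ j ∈ range (n + 1), t ^ j * (n + k - j)! / (j ! * (n - j)! * c ^ (n + k - j + 1)) := by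
  have hexpand : ∀ x : ℝ, (t + x) ^ n / n ! * ((x : ℂ) ^ k * cexp (-c * x)) =
      ∑ j ∈ range (n + 1), t ^ j / (j ! * (n - j)!) * ((x : ℂ) ^ (n + k - j) * cexp (-c * x)) := by
    intro x
    rw [add_pow, sum_div, sum_mul]
    refine sum_congr rfl fun j hj => ?_
    have hjn : j ≤ n := mem_range_succ_iff.mp hj
    have hfac : (n ! : ℂ) ≠ 0 := Nat.cast_ne_zero.mpr n.factorial_ne_zero
    rw [Nat.cast_choose ℂ hjn, show n + k - j = (n - j) + k by omega, pow_add]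
    field_simp
  simp_rw [hexpand]
  rw [integral_finsetSum _ fun j _ => (integrableOn_pow_mul_cexp_neg_mul_Ioi hc _).const_mul _]
  refine sum_congr rfl fun j _ => ?_
  rw [integral_const_mul, integral_pow_mul_cexp_neg_mul_Ioi hc]
  field_simp

end GammaIntegral

theorem ou_cross_covariance_formula_general (κ₁ κ₂ : ℂ) (h₁ : 0 < κ₁.re) (h₂ : 0 < κ₂.re)
    (i₁ i₂ : ℕ) (σ : ℝ) (t : ℝ) :
    (σ : ℂ) ^ 2 * (-κ₁) ^ i₁ * (-(starRingEnd ℂ) κ₂) ^ i₂ *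
      ∫ s in Set.Iic (0 : ℝ),
        Complex.exp (-κ₁ * ((t : ℂ) - s)) * (((t : ℂ) - s) ^ i₁ / (Nat.factorial i₁)) *
          Complex.exp ((starRingEnd ℂ) κ₂ * s) * ((-(s : ℂ)) ^ i₂ / (Nat.factorial i₂)) =
    (σ : ℂ) ^ 2 * (-κ₁) ^ i₁ * (-(starRingEnd ℂ) κ₂) ^ i₂ * Complex.exp (-κ₁ * t) /
        (Nat.factorial i₂) *
      ∑ j ∈ range (i₁ + 1),
        (t : ℂ) ^ j * (Nat.factorial (i₁ + i₂ - j)) /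
          ((Nat.factorial j) * (Nat.factorial (i₁ - j)) *
            (κ₁ + (starRingEnd ℂ) κ₂) ^ (i₁ + i₂ - j + 1)) := by
  set c := κ₁ + (starRingEnd ℂ) κ₂
  have hc : 0 < c.re := by simp only [c, add_re, conj_re]; positivity
  have hreflect : ∀ x : ℝ,
      cexp (-κ₁ * ((t : ℂ) - (-x : ℝ))) * (((t : ℂ) - (-x : ℝ)) ^ i₁ / i₁ !) *
          cexp ((starRingEnd ℂ) κ₂ * (-x : ℝ)) * ((-((-x : ℝ) : ℂ)) ^ i₂ / i₂ !) =
        cexp (-κ₁ * t) / i₂ ! * ((t + x) ^ i₁ / i₁ ! * ((x : ℂ) ^ i₂ * cexp (-c * x))) := by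
    intro x
    have hexp : cexp (-κ₁ * (t + x)) * cexp ((starRingEnd ℂ) κ₂ * -x) =
        cexp (-κ₁ * t) * cexp (-c * x) := by
      rw [← Complex.exp_add, ← Complex.exp_add]
      congr 1
      simp only [c]
      ring
    simp only [ofReal_neg, sub_neg_eq_add, neg_neg]
    linear_combination ((t + x) ^ i₁ / i₁ ! * ((x : ℂ) ^ i₂ / i₂ !)) * hexp
  rw [← neg_zero, ← integral_comp_neg_Ioi, setIntegral_congr_fun measurableSet_Ioi
    fun x _ => hreflect x, integral_const_mul,
    integral_add_pow_div_factorial_mul_pow_mul_cexp_neg_mul_Ioi hc]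
  ring

/-- Closed formula for the cross-covariance integral of Ornstein–Uhlenbeck
processes of degrees `i₁` and `i₂`. -/
theorem ou_cross_covariance_formula (κ₁ κ₂ : ℂ) (h₁ : 0 < κ₁.re) (h₂ : 0 < κ₂.re)
    (i₁ i₂ : ℕ) (σ : ℝ) (hσ : 0 < σ) (t : ℝ) (ht : 0 ≤ t) :
    (σ : ℂ) ^ 2 * (-κ₁) ^ i₁ * (-(starRingEnd ℂ) κ₂) ^ i₂ *
      ∫ s in Set.Iic (0 : ℝ),
        Complex.exp (-κ₁ * ((t : ℂ) - s)) * (((t : ℂ) - s) ^ i₁ / (Nat.factorial i₁)) *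
          Complex.exp ((starRingEnd ℂ) κ₂ * s) * ((-(s : ℂ)) ^ i₂ / (Nat.factorial i₂)) =
    (σ : ℂ) ^ 2 * (-κ₁) ^ i₁ * (-(starRingEnd ℂ) κ₂) ^ i₂ * Complex.exp (-κ₁ * t) /
        (Nat.factorial i₂) *
      ∑ j ∈ range (i₁ + 1),
        (t : ℂ) ^ j * (Nat.factorial (i₁ + i₂ - j)) /
          ((Nat.factorial j) * (Nat.factorial (i₁ - j)) *
            (κ₁ + (starRingEnd ℂ) κ₂) ^ (i₁ + i₂ - j + 1)) :=
  ou_cross_covariance_formula_general κ₁ κ₂ h₁ h₂ i₁ i₂ σ t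
end

section
/- Let 0 < λ₁ < λ₂ and let x = OU_{λ₁} OU_{λ₂}(σw) be the OU(2) process with real distinct parameters. Then its stationary covariance function is γ(t) = σ²(λ₂ e^{-λ₂ t} - λ₁ e^{-λ₁ t}) / (2(λ₂² - λ₁²)) for t ≥ 0; in particular γ(0) = σ²/(2(λ₁+λ₂)) and the lag-h autocorrelations are ρ_h = (λ₂ e^{-λ₂ h} - λ₁ e^{-λ₁ h})/(λ₂ - λ₁). -/
/-!
Since `x = K₀ ξ₀ + K₁ ξ₁` with `K_i = λ_i / (λ_i - λ_{1-i})`, bilinearity gives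
`γ(t) = σ² ∑_i K_i e^{-λ_i t} ∑_j K_j / (λ_i + λ_j)`. The inner sum does not depend on `i`:
it equals `1 / (2(λ₀ + λ₁))`, because `λ₀(λ_i + λ₁) - λ₁(λ_i + λ₀) = λ_i(λ₀ - λ₁)`.
What remains is `σ² (K₀ e^{-λ₀ t} + K₁ e^{-λ₁ t}) / (2(λ₀ + λ₁))`, which is the claimed formula.
-/

open MeasureTheory

theorem integral_sum_mul_sum {Ω ι κ : Type*} [MeasurableSpace Ω] {μ : Measure Ω}
    (s : Finset ι) (t : Finset κ) (c : ι → ℝ) (d : κ → ℝ) (f : ι → Ω → ℝ) (g : κ → Ω → ℝ)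
    (hfg : ∀ i ∈ s, ∀ j ∈ t, Integrable (fun ω => f i ω * g j ω) μ) :
    ∫ ω, (∑ i ∈ s, c i * f i ω) * (∑ j ∈ t, d j * g j ω) ∂μ =
      ∑ i ∈ s, ∑ j ∈ t, c i * d j * ∫ ω, f i ω * g j ω ∂μ := by
  have hterm : ∀ i ∈ s, ∀ j ∈ t, Integrable (fun ω => c i * d j * (f i ω * g j ω)) μ :=
    fun i hi j hj => (hfg i hi j hj).const_mul _
  simp_rw [Finset.sum_mul_sum, mul_mul_mul_comm]
  rw [integral_finsetSum _ fun i hi => integrable_finsetSum _ (hterm i hi)]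
  refine Finset.sum_congr rfl fun i hi => ?_
  rw [integral_finsetSum _ (hterm i hi)]
  simp_rw [integral_const_mul]

theorem one_div_one_sub_div {K : Type*} [DivisionRing K] {a b : K} (ha : a ≠ 0) :
    1 / (1 - b / a) = a / (a - b) := by
  rw [one_sub_div ha, one_div_div]

namespace OU2

noncomputable def weight (lam : Fin 2 → ℝ) : Fin 2 → ℝ :=
  ![lam 0 / (lam 0 - lam 1), lam 1 / (lam 1 - lam 0)]

variable {lam : Fin 2 → ℝ}

theorem sum_weight_div_add (h0 : 0 < lam 0) (h1 : 0 < lam 1) (hne : lam 0 ≠ lam 1)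
    (i : Fin 2) : ∑ j, weight lam j / (lam i + lam j) = 1 / (2 * (lam 0 + lam 1)) := by
  have h01 : lam 0 - lam 1 ≠ 0 := sub_ne_zero.mpr hne
  have h10 : lam 1 - lam 0 ≠ 0 := sub_ne_zero.mpr hne.symm
  revert i
  refine Fin.forall_fin_two.mpr ⟨?_, ?_⟩ <;>
  · simp only [weight, Fin.sum_univ_two, Matrix.cons_val_zero, Matrix.cons_val_one]
    field_simp
    ring

theorem sum_weight_mul_exp (hne : lam 0 ≠ lam 1) (t : ℝ) :
    ∑ i, weight lam i * Real.exp (-lam i * t) =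
      (lam 1 * Real.exp (-lam 1 * t) - lam 0 * Real.exp (-lam 0 * t)) / (lam 1 - lam 0) := by
  have h10 : lam 1 - lam 0 ≠ 0 := sub_ne_zero.mpr hne.symm
  simp only [weight, Fin.sum_univ_two, Matrix.cons_val_zero, Matrix.cons_val_one]
  field_simp
  ring

theorem covariance_eq {Ω : Type*} [MeasurableSpace Ω] {μ : Measure Ω}
    (h0 : 0 < lam 0) (h1 : 0 < lam 1) (hne : lam 0 ≠ lam 1) {σ : ℝ} {ξ : Fin 2 → ℝ → Ω → ℝ}
    (hint : ∀ j k t, Integrable (fun ω => ξ j t ω * ξ k 0 ω) μ)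
    (hcov : ∀ j k t, 0 ≤ t →
      ∫ ω, ξ j t ω * ξ k 0 ω ∂μ = σ ^ 2 * Real.exp (-lam j * t) / (lam j + lam k))
    {x : ℝ → Ω → ℝ} (hx : ∀ t ω, x t ω = ∑ i, weight lam i * ξ i t ω) {t : ℝ} (ht : 0 ≤ t) :
    ∫ ω, x t ω * x 0 ω ∂μ = σ ^ 2 / (2 * (lam 0 + lam 1)) *
      ((lam 1 * Real.exp (-lam 1 * t) - lam 0 * Real.exp (-lam 0 * t)) / (lam 1 - lam 0)) := by
  simp_rw [hx, integral_sum_mul_sum _ _ _ _ _ _ fun i _ j _ => hint i j t, hcov _ _ t ht,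
    ← sum_weight_mul_exp hne t, Finset.mul_sum]
  refine Finset.sum_congr rfl fun i _ => ?_
  calc ∑ j, weight lam i * weight lam j * (σ ^ 2 * Real.exp (-lam i * t) / (lam i + lam j))
      = σ ^ 2 * (weight lam i * Real.exp (-lam i * t)) *
          ∑ j, weight lam j / (lam i + lam j) := by
        rw [Finset.mul_sum]
        exact Finset.sum_congr rfl fun j _ => by ring
    _ = σ ^ 2 / (2 * (lam 0 + lam 1)) * (weight lam i * Real.exp (-lam i * t)) := by
        rw [sum_weight_div_add h0 h1 hne i]
        ring

end OU2

open OU2 in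
theorem ou2_covariance_general
    {Ω : Type*} [MeasurableSpace Ω] (μ : Measure Ω)
    (lam : Fin 2 → ℝ) (hlam : 0 < lam 0) (hlt : lam 0 < lam 1) (σ : ℝ) (hσ : 0 < σ)
    (ξ : Fin 2 → ℝ → Ω → ℝ)
    (hint : ∀ (j k : Fin 2) (t s : ℝ), Integrable (fun ω => ξ j t ω * ξ k s ω) μ)
    (hcov : ∀ (j k : Fin 2) (t : ℝ), 0 ≤ t →
      ∫ ω, ξ j t ω * ξ k 0 ω ∂μ = σ ^ 2 * Real.exp (-lam j * t) / (lam j + lam k))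
    (x : ℝ → Ω → ℝ)
    (hx : ∀ t ω, x t ω = (1 / (1 - lam 1 / lam 0)) * ξ 0 t ω +
      (1 / (1 - lam 0 / lam 1)) * ξ 1 t ω) :
    (∀ t : ℝ, 0 ≤ t → ∫ ω, x t ω * x 0 ω ∂μ =
      σ ^ 2 * (lam 1 * Real.exp (-lam 1 * t) - lam 0 * Real.exp (-lam 0 * t)) /
        (2 * ((lam 1) ^ 2 - (lam 0) ^ 2))) ∧
    (∫ ω, x 0 ω * x 0 ω ∂μ = σ ^ 2 / (2 * (lam 0 + lam 1))) ∧
    (∀ h : ℕ, (∫ ω, x h ω * x 0 ω ∂μ) / ∫ ω, x 0 ω * x 0 ω ∂μ =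
      (lam 1 * Real.exp (-lam 1 * h) - lam 0 * Real.exp (-lam 0 * h)) /
        (lam 1 - lam 0)) := by
  have hlam1 : 0 < lam 1 := hlam.trans hlt
  have hx' : ∀ t ω, x t ω = ∑ i, weight lam i * ξ i t ω := fun t ω => by
    rw [hx, Fin.sum_univ_two, one_div_one_sub_div hlam.ne', one_div_one_sub_div hlam1.ne']
    rfl
  have hγ := fun t (ht : 0 ≤ t) =>
    covariance_eq hlam hlam1 hlt.ne (fun j k t => hint j k t 0) hcov hx' ht
  have hγ0 : ∫ ω, x 0 ω * x 0 ω ∂μ = σ ^ 2 / (2 * (lam 0 + lam 1)) := by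
    rw [hγ 0 le_rfl]
    simp only [mul_zero, Real.exp_zero, mul_one]
    rw [div_self (sub_ne_zero.mpr hlt.ne'), mul_one]
  refine ⟨fun t ht => ?_, hγ0, fun h => ?_⟩
  · rw [hγ t ht, div_mul_div_comm, sq_sub_sq]
    congr 1
    ring
  · rw [hγ h h.cast_nonneg, hγ0, mul_div_cancel_left₀]
    positivity

/-- Stationary covariance of the OU(2) process `x = OU_{λ₁}OU_{λ₂}(σ w)` with
distinct real parameters `0 < λ₁ < λ₂`.  By partial fractions
`x = K₁ ξ₁ + K₂ ξ₂` with `K₁ = 1/(1-λ₂/λ₁)`, `K₂ = 1/(1-λ₁/λ₂)`, where the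
basic OU processes `ξ₁, ξ₂` (driven by the same Wiener process) have
cross-covariances `E[ξ_j(t) ξ_k(0)] = σ² e^{-λ_j t}/(λ_j+λ_k)` for `t ≥ 0`.
Then `γ(t) = σ²(λ₂ e^{-λ₂ t} - λ₁ e^{-λ₁ t})/(2(λ₂²-λ₁²))`, in particular
`γ(0) = σ²/(2(λ₁+λ₂))`, and the lag-`h` autocorrelation is
`ρ_h = (λ₂ e^{-λ₂ h} - λ₁ e^{-λ₁ h})/(λ₂-λ₁)`. -/
theorem ou2_covariance
    {Ω : Type*} [MeasurableSpace Ω] (μ : Measure Ω) [IsProbabilityMeasure μ]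
    (lam : Fin 2 → ℝ) (hlam : 0 < lam 0) (hlt : lam 0 < lam 1) (σ : ℝ) (hσ : 0 < σ)
    (ξ : Fin 2 → ℝ → Ω → ℝ)
    (hint : ∀ (j k : Fin 2) (t s : ℝ), Integrable (fun ω => ξ j t ω * ξ k s ω) μ)
    (hcov : ∀ (j k : Fin 2) (t : ℝ), 0 ≤ t →
      ∫ ω, ξ j t ω * ξ k 0 ω ∂μ = σ ^ 2 * Real.exp (-lam j * t) / (lam j + lam k))
    (x : ℝ → Ω → ℝ)
    (hx : ∀ t ω, x t ω = (1 / (1 - lam 1 / lam 0)) * ξ 0 t ω +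
      (1 / (1 - lam 0 / lam 1)) * ξ 1 t ω) :
    (∀ t : ℝ, 0 ≤ t → ∫ ω, x t ω * x 0 ω ∂μ =
      σ ^ 2 * (lam 1 * Real.exp (-lam 1 * t) - lam 0 * Real.exp (-lam 0 * t)) /
        (2 * ((lam 1) ^ 2 - (lam 0) ^ 2))) ∧
    (∫ ω, x 0 ω * x 0 ω ∂μ = σ ^ 2 / (2 * (lam 0 + lam 1))) ∧
    (∀ h : ℕ, (∫ ω, x h ω * x 0 ω ∂μ) / ∫ ω, x 0 ω * x 0 ω ∂μ =
      (lam 1 * Real.exp (-lam 1 * h) - lam 0 * Real.exp (-lam 0 * h)) /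
        (lam 1 - lam 0)) :=
  ou2_covariance_general μ lam hlam hlt σ hσ ξ hint hcov x hx
end
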